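/- For every δ ∈ [0,1] the map t ↦ α^δ_t := A^δ_t·exp(−∫_0^t (A^δ_r − δκ_r)/η_r dr) is non-increasing on [0,T), the limit α^δ_T := lim_{t↗T} α^δ_t exists and lies in (0,∞), and moreover lim_{δ→0} α^δ_T = α⁰_T. -/

import Mathlib

open MeasureTheory intervalIntegral Set Filter Topology

noncomputable section

structure Coeffs (T : ℝ) where
  lam : ℝ → ℝ
  kap : ℝ → ℝ
  kap' : ℝ → ℝ
  eta : ℝ → ℝ
  eta' : ℝ → ℝ
  lam_meas : Measurable lam
  lam_bdd : ∃ M, ∀ t ∈ Set.Icc (0:ℝ) T, |lam t| ≤ M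
  lam_nonneg : ∀ t ∈ Set.Icc (0:ℝ) T, 0 ≤ lam t
  kap_hasDeriv : ∀ t ∈ Set.Icc (0:ℝ) T, HasDerivWithinAt kap (kap' t) (Set.Icc (0:ℝ) T) t
  kap'_cont : ContinuousOn kap' (Set.Icc (0:ℝ) T)
  kap_nonneg : ∀ t ∈ Set.Icc (0:ℝ) T, 0 ≤ kap t
  eta_hasDeriv : ∀ t ∈ Set.Icc (0:ℝ) T, HasDerivWithinAt eta (eta' t) (Set.Icc (0:ℝ) T) t
  eta'_cont : ContinuousOn eta' (Set.Icc (0:ℝ) T)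
  eta_pos : ∀ t ∈ Set.Icc (0:ℝ) T, 0 < eta t

/-- `A` solves the Riccati terminal value problem
`-Ȧ_t = -A_t^2/η_t + δ·(κ_t/η_t)·A_t + λ_t` on `[0,T)` (in integral form, which encodes
absolute continuity with the stated derivative a.e.) with singular terminal condition
`lim_{t↗T} A_t = ∞`. -/
def IsRiccatiSol (T δ : ℝ) (C : Coeffs T) (A : ℝ → ℝ) : Prop :=
  ContinuousOn A (Set.Ico 0 T) ∧
  (∀ s ∈ Set.Ico (0:ℝ) T, ∀ t ∈ Set.Ico (0:ℝ) T,
    A t = A s + ∫ r in s..t, (A r ^ 2 / C.eta r - δ * (C.kap r / C.eta r) * A r - C.lam r)) ∧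
  Filter.Tendsto A (nhdsWithin T (Set.Iio T)) Filter.atTop

/-- The function `h^δ`. -/
def hFun (T δ : ℝ) (C : Coeffs T) (A : ℝ → ℝ) (t : ℝ) : ℝ :=
  Real.exp (-∫ r in (0:ℝ)..t, A r / C.eta r) *
    ∫ s in (0:ℝ)..t, (1 / C.eta s) * Real.exp (∫ r in (0:ℝ)..s, (2 * A r - δ * C.kap r) / C.eta r)

/-- `f_μ(t) = ∫_0^t κ_u μ_u h^δ_u du`. -/
def fMu (T δ : ℝ) (C : Coeffs T) (A μ : ℝ → ℝ) (t : ℝ) : ℝ :=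
  ∫ u in (0:ℝ)..t, C.kap u * μ u * hFun T δ C A u

/-- Running maximum `f̄_μ(t) = max_{0 ≤ s ≤ t} f_μ(s)`. -/
def fBar (T δ : ℝ) (C : Coeffs T) (A μ : ℝ → ℝ) (t : ℝ) : ℝ :=
  sSup (fMu T δ C A μ '' Set.Icc 0 t)

/-- Running minimum `f̲_μ(t) = min_{0 ≤ s ≤ t} f_μ(s)`. -/
def fUnd (T δ : ℝ) (C : Coeffs T) (A μ : ℝ → ℝ) (t : ℝ) : ℝ :=
  sInf (fMu T δ C A μ '' Set.Icc 0 t)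

/-- The candidate liquidation time `τ_μ(x)`, with the convention `inf ∅ = T`. -/
def tauMu (T δ : ℝ) (C : Coeffs T) (A μ : ℝ → ℝ) (x : ℝ) : ℝ :=
  sInf (insert T {t ∈ Set.Icc (0:ℝ) T |
    fMu T δ C A μ t = max (min x (fBar T δ C A μ T)) (fUnd T δ C A μ T)})

/-- `(X, Y)` is a (continuous) solution of the forward-backward system
`Ẋ_t = -((Y_t - δκ_t X_t)/η_t)·1_{t ≤ τ}`, `-Ẏ_t = (λ_t X_t + κ_t μ_t)·1_{t ≤ τ}` for
a.e. `t ∈ [0,T]` (in integral form), with `X_0 = x` and `X_T = 0`. -/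
def IsFBSol (T δ : ℝ) (C : Coeffs T) (μ : ℝ → ℝ) (x τ : ℝ) (X Y : ℝ → ℝ) : Prop :=
  ContinuousOn X (Set.Icc 0 T) ∧ ContinuousOn Y (Set.Icc 0 T) ∧
  X 0 = x ∧ X T = 0 ∧
  (∀ t ∈ Set.Icc (0:ℝ) T,
    X t = x - ∫ s in (0:ℝ)..t,
      ((Y s - δ * C.kap s * X s) / C.eta s) * Set.indicator (Set.Iic τ) (fun _ => (1:ℝ)) s) ∧
  (∀ t ∈ Set.Icc (0:ℝ) T,
    Y t = Y T + ∫ s in t..T,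
      (C.lam s * X s + C.kap s * μ s) * Set.indicator (Set.Iic τ) (fun _ => (1:ℝ)) s)

/-- The candidate strategy `ξ = (Y - δκX)/η`. -/
def xiC (T δ : ℝ) (C : Coeffs T) (X Y : ℝ → ℝ) (t : ℝ) : ℝ :=
  (Y t - δ * C.kap t * X t) / C.eta t

/-- The admissible set `𝒜_x`: square-integrable strategies whose portfolio process is
absorbed at zero and satisfies the liquidation constraint. -/
def Admissible (T x : ℝ) (ξ : ℝ → ℝ) : Prop :=
  MeasureTheory.MemLp ξ 2 (MeasureTheory.volume.restrict (Set.Icc 0 T)) ∧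
  ∃ τ ∈ Set.Ioc (0:ℝ) T,
    (∀ t ∈ Set.Ico (0:ℝ) τ, x - ∫ s in (0:ℝ)..t, ξ s ≠ 0) ∧
    (∀ t ∈ Set.Icc τ T, x - ∫ s in (0:ℝ)..t, ξ s = 0)

/-- The cost functional `J(ξ; μ)` of the representative player with initial position `x`. -/
def Jcost (T : ℝ) (C : Coeffs T) (μ ξ : ℝ → ℝ) (x : ℝ) : ℝ :=
  ∫ t in (0:ℝ)..T, ((1/2) * C.eta t * ξ t ^ 2
    + C.kap t * μ t * (x - ∫ s in (0:ℝ)..t, ξ s)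
    + (1/2) * C.lam t * (x - ∫ s in (0:ℝ)..t, ξ s) ^ 2)

/-- Right tail distribution function `q₀(x) = ν([x,∞))`. -/
def q0 (ν : Measure ℝ) (x : ℝ) : ℝ := (ν (Set.Ici x)).toReal

/-- Left tail distribution function `p₀(x) = ν((-∞,x])`. -/
def p0 (ν : Measure ℝ) (x : ℝ) : ℝ := (ν (Set.Iic x)).toReal

/-- Supremum norm on `[0,T]`. -/
def supNorm (T : ℝ) (f : ℝ → ℝ) : ℝ := sSup ((fun t => |f t|) '' Set.Icc 0 T)

/-- Essential supremum norm on `[0,T]`. -/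
def essSupNorm (T : ℝ) (f : ℝ → ℝ) : ℝ :=
  (MeasureTheory.eLpNorm f ⊤ (MeasureTheory.volume.restrict (Set.Icc 0 T))).toReal


/-!
Along a solution of the Riccati equation, `α = A·exp(-∫(A - δκ)/η)` satisfies
`α̇ = -λ·exp(-∫(A - δκ)/η) ≤ 0`: the quadratic terms cancel. As `A → ∞` at `T`, `α` stays
positive, and once `A` is large compared with `‖λ‖_∞ T` the remaining loss of `α` is at most half
its value, so the limit `α_T` is positive too.

For the dependence on `δ`, the difference `D = A^δ - A^0` solves a linear equation; with the
integrating factor `exp(-∫(A^δ + A^0)/η)`, which vanishes at `T` fast enough to kill `D`, one finds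
`0 ≤ D ≤ δ·max κ`. Hence the exponential factors of `α^δ` and `α^0` differ by `O(δ)` uniformly, and
so do `α^δ_T = A^δ_0 - ∫_0^T λ·exp(-∫(A^δ - δκ)/η)` and `α^0_T`.
-/

theorem MeasureTheory.LocallyIntegrableOn.intervalIntegrable {f : ℝ → ℝ} {s : Set ℝ}
    (hf : LocallyIntegrableOn f s) (hs : s.OrdConnected) {x y : ℝ} (hx : x ∈ s) (hy : y ∈ s) :
    IntervalIntegrable f volume x y :=
  (hf.integrableOn_compact_subset (hs.uIcc_subset hx hy) isCompact_uIcc).intervalIntegrable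

def IsPrimitiveOn (F f : ℝ → ℝ) (s : Set ℝ) : Prop :=
  ∀ x ∈ s, ∀ y ∈ s, F y = F x + ∫ u in x..y, f u

namespace IsPrimitiveOn

variable {F G f g : ℝ → ℝ} {s : Set ℝ}

theorem congr (hF : IsPrimitiveOn F f s) (hs : s.OrdConnected) (h : EqOn f g s) :
    IsPrimitiveOn F g s := fun x hx y hy => by
  rw [hF x hx y hy, integral_congr (h.mono (hs.uIcc_subset hx hy))]

theorem sub (hF : IsPrimitiveOn F f s) (hG : IsPrimitiveOn G g s) (hs : s.OrdConnected)
    (hf : LocallyIntegrableOn f s) (hg : LocallyIntegrableOn g s) :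
    IsPrimitiveOn (fun t => F t - G t) (fun t => f t - g t) s := fun x hx y hy => by
  beta_reduce
  rw [hF x hx y hy, hG x hx y hy,
    integral_sub (hf.intervalIntegrable hs hx hy) (hg.intervalIntegrable hs hx hy)]
  ring

theorem antitoneOn (hF : IsPrimitiveOn F f s) (hs : s.OrdConnected) (hf : ∀ x ∈ s, f x ≤ 0) :
    AntitoneOn F s := fun x hx y hy hxy => by
  have := integral_nonneg (μ := volume) hxy fun u hu =>
    neg_nonneg.2 (hf u (hs.out hx hy hu))
  rw [intervalIntegral.integral_neg] at this
  linarith [hF x hx y hy]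

theorem mul (hF : IsPrimitiveOn F f s) (hG : IsPrimitiveOn G g s) (hs : s.OrdConnected)
    (hf : LocallyIntegrableOn f s) (hg : LocallyIntegrableOn g s) :
    IsPrimitiveOn (fun t => F t * G t) (fun t => f t * G t + F t * g t) s := by
  intro x hx y hy
  have hxy := hs.uIcc_subset hx hy
  have hfi := hf.intervalIntegrable hs hx hy
  have hgi := hg.intervalIntegrable hs hx hy
  have hac {H h : ℝ → ℝ} (hh : IntervalIntegrable h volume x y) :
      AbsolutelyContinuousOnInterval (fun t => H x + ∫ u in x..t, h u) x y :=
    (contDiffOn_const.absolutelyContinuousOnInterval).fun_add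
      (hh.absolutelyContinuousOnInterval_intervalIntegral left_mem_uIcc)
  have hderiv {H h : ℝ → ℝ} (hh : IntervalIntegrable h volume x y) :
      ∀ᵐ u, u ∈ uIoc x y → deriv (fun t => H x + ∫ v in x..t, h v) u = h u := by
    filter_upwards [hh.ae_hasDerivAt_integral] with u hu hxu
    exact ((hu (uIoc_subset_uIcc hxu) x left_mem_uIcc).const_add _).deriv
  have key := (hac (H := F) hfi).integral_deriv_mul_eq_sub (hac (H := G) hgi)
  simp only [← hF x hx y hy, ← hG x hx y hy, add_zero, integral_same] at key
  show F y * G y = F x * G x + ∫ u in x..y, (f u * G u + F u * g u)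
  rw [← sub_eq_iff_eq_add', ← key]
  refine integral_congr_ae ?_
  filter_upwards [hderiv (H := F) hfi, hderiv (H := G) hgi] with u hFu hGu hu
  have hu' := hxy (uIoc_subset_uIcc hu)
  rw [hFu hu, hGu hu, ← hF x hx u hu', ← hG x hx u hu']

end IsPrimitiveOn

theorem continuousOn_primitive_Ico {f : ℝ → ℝ} {a b : ℝ} (hf : LocallyIntegrableOn f (Ico a b)) :
    ContinuousOn (fun t => ∫ u in a..t, f u) (Ico a b) := by
  intro x hx
  have hm : (x + b) / 2 ∈ Ico a b := ⟨by linarith [hx.1, hx.2], by linarith [hx.2]⟩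
  refine ((continuousOn_primitive_interval' (hf.intervalIntegrable ordConnected_Ico
    ⟨le_rfl, hx.1.trans_lt hx.2⟩ hm) left_mem_uIcc) x ?_).mono_of_mem_nhdsWithin ?_
  · rw [uIcc_of_le hm.1]; exact ⟨hx.1, by linarith [hx.2]⟩
  · rw [uIcc_of_le hm.1]
    exact mem_nhdsWithin.2 ⟨Iio ((x + b) / 2), isOpen_Iio, show x < _ by linarith [hx.2],
      fun t ht => ⟨ht.2.1, ht.1.le⟩⟩

theorem isPrimitiveOn_exp_neg_integral {a b : ℝ} {c : ℝ → ℝ} (hc : ContinuousOn c (Ico a b)) :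
    IsPrimitiveOn (fun t => Real.exp (-∫ u in a..t, c u))
      (fun t => -(c t * Real.exp (-∫ u in a..t, c u))) (Ico a b) := by
  have hloc := hc.locallyIntegrableOn (μ := volume) measurableSet_Ico
  have hcont : ContinuousOn (fun t => Real.exp (-∫ u in a..t, c u)) (Ico a b) :=
    (continuousOn_primitive_Ico hloc).neg.rexp
  intro x hx y hy
  have hxy := ordConnected_Ico.uIcc_subset hx hy
  have hderiv : ∀ t ∈ Ioo (min x y) (max x y), HasDerivAt
      (fun t => Real.exp (-∫ u in a..t, c u)) (-(c t * Real.exp (-∫ u in a..t, c u))) t := by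
    intro t ht
    have hIoo : Ioo (min x y) (max x y) ⊆ Ico a b := Ioo_subset_Icc_self.trans hxy
    have hP := integral_hasDerivAt_right
      (hloc.intervalIntegrable ordConnected_Ico ⟨le_rfl, hx.1.trans_lt hx.2⟩ (hIoo ht))
      ((hc.mono hIoo).stronglyMeasurableAtFilter isOpen_Ioo t ht)
      ((hc.mono hIoo).continuousAt (isOpen_Ioo.mem_nhds ht))
    convert hP.fun_neg.exp using 1
    ring
  have := integral_eq_sub_of_hasDeriv_right (hcont.mono hxy)
    (fun t ht => (hderiv t ht).hasDerivWithinAt) ((hc.mul hcont).neg.mono hxy).intervalIntegrable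
  linarith

theorem Real.abs_exp_sub_exp_le {x y c : ℝ} (hy : y ≤ 0) (h : |x - y| ≤ c) :
    |Real.exp x - Real.exp y| ≤ Real.exp c - Real.exp (-c) := by
  obtain ⟨h₁, h₂⟩ := abs_le.1 h
  have hup : Real.exp x ≤ Real.exp y * Real.exp c := by
    rw [← Real.exp_add]; exact Real.exp_le_exp.2 (by linarith)
  have hlow : Real.exp y * Real.exp (-c) ≤ Real.exp x := by
    rw [← Real.exp_add]; exact Real.exp_le_exp.2 (by linarith)
  have hy1 : Real.exp y ≤ 1 := Real.exp_le_one_iff.2 hy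
  have hc1 : Real.exp (-c) ≤ 1 := Real.exp_le_one_iff.2 (by linarith)
  have hc2 : 1 ≤ Real.exp c := Real.one_le_exp_iff.2 (by linarith)
  rw [abs_le]
  constructor <;> nlinarith [Real.exp_pos y, Real.exp_pos (-c)]

namespace Coeffs

variable {T : ℝ} (C : Coeffs T)

theorem continuousOn_kap : ContinuousOn C.kap (Icc 0 T) := fun t ht =>
  (C.kap_hasDeriv t ht).continuousWithinAt

theorem continuousOn_eta : ContinuousOn C.eta (Icc 0 T) := fun t ht =>
  (C.eta_hasDeriv t ht).continuousWithinAt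

theorem continuousOn_div_eta {f : ℝ → ℝ} (hf : ContinuousOn f (Ico 0 T)) :
    ContinuousOn (fun t => f t / C.eta t) (Ico 0 T) :=
  hf.div (C.continuousOn_eta.mono Ico_subset_Icc_self)
    fun t ht => (C.eta_pos t (Ico_subset_Icc_self ht)).ne'

theorem continuousOn_kap_div_eta : ContinuousOn (fun t => C.kap t / C.eta t) (Ico 0 T) :=
  C.continuousOn_div_eta (C.continuousOn_kap.mono Ico_subset_Icc_self)

theorem continuousOn_drift {A : ℝ → ℝ} (hA : ContinuousOn A (Ico 0 T)) (δ : ℝ) :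
    ContinuousOn (fun t => (A t - δ * C.kap t) / C.eta t) (Ico 0 T) :=
  C.continuousOn_div_eta (hA.sub (continuousOn_const.mul
    (C.continuousOn_kap.mono Ico_subset_Icc_self)))

theorem integrableOn_lam : IntegrableOn C.lam (Icc 0 T) := by
  obtain ⟨M, hM⟩ := C.lam_bdd
  exact Measure.integrableOn_of_bounded (M := M) measure_Icc_lt_top.ne
    C.lam_meas.aestronglyMeasurable ((ae_restrict_iff' measurableSet_Icc).2 (.of_forall hM))

theorem locallyIntegrableOn_lam : LocallyIntegrableOn C.lam (Ico 0 T) :=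
  (C.integrableOn_lam.mono_set Ico_subset_Icc_self).locallyIntegrableOn

end Coeffs

def discount (T δ : ℝ) (C : Coeffs T) (A : ℝ → ℝ) (t : ℝ) : ℝ :=
  Real.exp (-∫ r in (0:ℝ)..t, (A r - δ * C.kap r) / C.eta r)

def alpha (T δ : ℝ) (C : Coeffs T) (A : ℝ → ℝ) (t : ℝ) : ℝ :=
  A t * discount T δ C A t

/-- `α^δ_T`; it is the left limit of the antitone function `alpha` at `T`. -/
def alphaLim (T δ : ℝ) (C : Coeffs T) (A : ℝ → ℝ) : ℝ :=
  sInf (alpha T δ C A '' Ioo 0 T)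

section discount

variable {T : ℝ} (C : Coeffs T) {A : ℝ → ℝ}

theorem discount_pos (δ t : ℝ) : 0 < discount T δ C A t := Real.exp_pos _

theorem discount_zero (δ : ℝ) : discount T δ C A 0 = 1 := by simp [discount]

theorem continuousOn_discount (hA : ContinuousOn A (Ico 0 T)) (δ : ℝ) :
    ContinuousOn (discount T δ C A) (Ico 0 T) :=
  (continuousOn_primitive_Ico
    ((C.continuousOn_drift hA δ).locallyIntegrableOn measurableSet_Ico)).neg.rexp

theorem isPrimitiveOn_discount (hA : ContinuousOn A (Ico 0 T)) (δ : ℝ) :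
    IsPrimitiveOn (discount T δ C A)
      (fun t => -((A t - δ * C.kap t) / C.eta t * discount T δ C A t)) (Ico 0 T) :=
  isPrimitiveOn_exp_neg_integral (C.continuousOn_drift hA δ)

theorem locallyIntegrableOn_lam_mul_discount (hA : ContinuousOn A (Ico 0 T)) (δ : ℝ) :
    LocallyIntegrableOn (fun t => C.lam t * discount T δ C A t) (Ico 0 T) :=
  C.locallyIntegrableOn_lam.mul_continuousOn (continuousOn_discount C hA δ) isLocallyClosed_Ico

theorem discount_le_discount (hA : ContinuousOn A (Ico 0 T)) {δ : ℝ} (hδ : 0 ≤ δ) {t : ℝ}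
    (ht : t ∈ Ico 0 T) : discount T 0 C A t ≤ discount T δ C A t := by
  have h0 : (0:ℝ) ∈ Ico 0 T := ⟨le_rfl, ht.1.trans_lt ht.2⟩
  refine Real.exp_le_exp.2 (neg_le_neg (integral_mono_on ht.1
    ((C.continuousOn_drift hA δ).mono (ordConnected_Ico.uIcc_subset h0 ht)).intervalIntegrable
    ((C.continuousOn_drift hA 0).mono (ordConnected_Ico.uIcc_subset h0 ht)).intervalIntegrable
    fun u hu => ?_))
  have hu' : u ∈ Icc 0 T := ⟨hu.1, hu.2.trans ht.2.le⟩
  have := C.kap_nonneg u hu'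
  exact div_le_div_of_nonneg_right (by nlinarith) (C.eta_pos u hu').le

end discount

namespace IsRiccatiSol

variable {T δ : ℝ} {C : Coeffs T} {A : ℝ → ℝ}

theorem locallyIntegrableOn (hA : IsRiccatiSol T δ C A) :
    LocallyIntegrableOn
      (fun r => A r ^ 2 / C.eta r - δ * (C.kap r / C.eta r) * A r - C.lam r) (Ico 0 T) :=
  (((C.continuousOn_div_eta (hA.1.pow 2)).sub
    ((continuousOn_const.mul C.continuousOn_kap_div_eta).mul hA.1)).locallyIntegrableOn
      measurableSet_Ico).sub C.locallyIntegrableOn_lam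

theorem isPrimitiveOn (hA : IsRiccatiSol T δ C A) :
    IsPrimitiveOn A
      (fun r => A r ^ 2 / C.eta r - δ * (C.kap r / C.eta r) * A r - C.lam r) (Ico 0 T) :=
  hA.2.1

theorem isPrimitiveOn_alpha (hA : IsRiccatiSol T δ C A) :
    IsPrimitiveOn (alpha T δ C A) (fun t => -(C.lam t * discount T δ C A t)) (Ico 0 T) := by
  refine (hA.isPrimitiveOn.mul (isPrimitiveOn_discount C hA.1 δ) ordConnected_Ico
    hA.locallyIntegrableOn ?_).congr ordConnected_Ico fun t ht => ?_
  · exact ((C.continuousOn_drift hA.1 δ).mul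
      (continuousOn_discount C hA.1 δ)).neg.locallyIntegrableOn measurableSet_Ico
  · have := (C.eta_pos t (Ico_subset_Icc_self ht)).ne'
    field_simp
    ring

theorem alpha_eq_sub_integral (hA : IsRiccatiSol T δ C A) {t : ℝ}
    (ht : t ∈ Ico 0 T) : alpha T δ C A t = A 0 - ∫ u in (0:ℝ)..t, C.lam u * discount T δ C A u := by
  rw [hA.isPrimitiveOn_alpha 0 ⟨le_rfl, ht.1.trans_lt ht.2⟩ t ht, intervalIntegral.integral_neg,
    alpha, discount_zero, mul_one, sub_eq_add_neg]

theorem antitoneOn_alpha (hA : IsRiccatiSol T δ C A) : AntitoneOn (alpha T δ C A) (Ico 0 T) :=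
  hA.isPrimitiveOn_alpha.antitoneOn ordConnected_Ico fun t ht =>
    neg_nonpos.2 (mul_nonneg (C.lam_nonneg t (Ico_subset_Icc_self ht)) (discount_pos C δ t).le)

theorem alpha_pos (hA : IsRiccatiSol T δ C A) {t : ℝ} (ht : t ∈ Ico 0 T) :
    0 < alpha T δ C A t := by
  obtain ⟨r, ⟨htr, hrT⟩, hr⟩ :=
    ((show ∀ᶠ r in 𝓝[<] T, r ∈ Ioo t T from Ioo_mem_nhdsLT ht.2).and
      (hA.2.2.eventually_ge_atTop 1)).exists
  exact (mul_pos (one_pos.trans_le hr) (discount_pos C δ r)).trans_le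
    (hA.antitoneOn_alpha ht ⟨ht.1.trans htr.le, hrT⟩ htr.le)

theorem pos (hA : IsRiccatiSol T δ C A) {t : ℝ} (ht : t ∈ Ico 0 T) : 0 < A t :=
  pos_of_mul_pos_left (hA.alpha_pos ht) (discount_pos C δ t).le

theorem tendsto_discount (hA : IsRiccatiSol T δ C A) (hT : 0 < T) :
    Tendsto (discount T δ C A) (𝓝[<] T) (𝓝 0) := by
  refine squeeze_zero' (.of_forall fun t => (discount_pos C δ t).le) ?_
    ((tendsto_const_nhds (x := alpha T δ C A 0)).div_atTop hA.2.2)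
  filter_upwards [Ioo_mem_nhdsLT hT] with t ht
  have ht' : t ∈ Ico 0 T := Ioo_subset_Ico_self ht
  rw [le_div_iff₀ (hA.pos ht'), mul_comm]
  exact hA.antitoneOn_alpha ⟨le_rfl, hT⟩ ht' ht'.1

theorem tendsto_alpha (hA : IsRiccatiSol T δ C A) (hT : 0 < T) :
    Tendsto (alpha T δ C A) (𝓝[<] T) (𝓝 (alphaLim T δ C A)) :=
  (hA.antitoneOn_alpha.mono Ioo_subset_Ico_self).tendsto_nhdsWithin_Ioo_left (nonempty_Ioo.2 hT)
    ⟨0, forall_mem_image.2 fun _ ht => (hA.alpha_pos (Ioo_subset_Ico_self ht)).le⟩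

/-- On `[s, t]`, `λ·discount = λα/A ≤ M·α s/N`. -/
theorem alpha_mul_one_sub_le (hA : IsRiccatiSol T δ C A) {s t M N : ℝ} (hs : s ∈ Ico 0 T)
    (ht : t ∈ Ico 0 T) (hst : s ≤ t) (hM : ∀ u ∈ Icc s t, C.lam u ≤ M) (hN : 0 < N)
    (hAN : ∀ u ∈ Icc s t, N ≤ A u) :
    alpha T δ C A s * (1 - M * (t - s) / N) ≤ alpha T δ C A t := by
  set α := alpha T δ C A
  have hbound : ∀ u ∈ Icc s t, C.lam u * discount T δ C A u ≤ M * (α s / N) := by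
    intro u hu
    have hu' : u ∈ Ico 0 T := ⟨hs.1.trans hu.1, hu.2.trans_lt ht.2⟩
    have hdiscount : discount T δ C A u ≤ α s / N := by
      rw [le_div_iff₀ hN]
      calc discount T δ C A u * N
          ≤ discount T δ C A u * A u :=
            mul_le_mul_of_nonneg_left (hAN u hu) (discount_pos C δ u).le
        _ = α u := mul_comm _ _
        _ ≤ α s := hA.antitoneOn_alpha hs hu' hu.1
    have hlam := C.lam_nonneg u (Ico_subset_Icc_self hu')
    exact mul_le_mul (hM u hu) hdiscount (discount_pos C δ u).le (hlam.trans (hM u hu))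
  have hloss := integral_mono_on hst
    ((locallyIntegrableOn_lam_mul_discount C hA.1 δ).intervalIntegrable ordConnected_Ico hs ht)
    intervalIntegrable_const hbound
  rw [intervalIntegral.integral_const, smul_eq_mul] at hloss
  have hα := hA.isPrimitiveOn_alpha s hs t ht
  rw [intervalIntegral.integral_neg] at hα
  have : α s * (1 - M * (t - s) / N) = α s - (t - s) * (M * (α s / N)) := by
    field_simp
  linarith

theorem alphaLim_pos (hA : IsRiccatiSol T δ C A) (hT : 0 < T) : 0 < alphaLim T δ C A := by
  obtain ⟨M, hM⟩ := C.lam_bdd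
  have hM0 : 0 ≤ M := (abs_nonneg _).trans (hM 0 ⟨le_rfl, hT.le⟩)
  have hN : 0 < 2 * M * T + 1 := by positivity
  obtain ⟨l, hlT, hl⟩ :=
    mem_nhdsLT_iff_exists_Ico_subset.1 (hA.2.2.eventually_ge_atTop (2 * M * T + 1))
  have hs : max l 0 ∈ Ico 0 T := ⟨le_max_right _ _, max_lt hlT hT⟩
  have hαs := hA.alpha_pos hs
  have hhalf : ∀ t ∈ Ioo (max l 0) T, alpha T δ C A (max l 0) / 2 ≤ alpha T δ C A t := by
    intro t ht
    refine le_trans ?_ (hA.alpha_mul_one_sub_le hs ⟨hs.1.trans ht.1.le, ht.2⟩ ht.1.le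
      (fun u hu => (le_abs_self _).trans (hM u ⟨hs.1.trans hu.1, hu.2.trans ht.2.le⟩)) hN
      fun u hu => hl ⟨(le_max_left _ _).trans hu.1, hu.2.trans_lt ht.2⟩)
    have : M * (t - max l 0) / (2 * M * T + 1) ≤ 1 / 2 := by
      rw [div_le_iff₀ hN]; nlinarith [ht.1, ht.2, hs.1]
    nlinarith
  exact (half_pos hαs).trans_le
    (ge_of_tendsto (hA.tendsto_alpha hT) (mem_of_superset (Ioo_mem_nhdsLT hs.2) hhalf))

end IsRiccatiSol

section comparison

variable {T δ : ℝ} {C : Coeffs T} {A B : ℝ → ℝ}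

theorem IsRiccatiSol.antitoneOn_discount_zero (hA : IsRiccatiSol T δ C A) :
    AntitoneOn (discount T 0 C A) (Ico 0 T) :=
  (isPrimitiveOn_discount C hA.1 0).antitoneOn ordConnected_Ico fun t ht =>
    neg_nonpos.2 (mul_nonneg (div_nonneg (by simpa using (hA.pos ht).le)
      (C.eta_pos t (Ico_subset_Icc_self ht)).le) (discount_pos C 0 t).le)

/-- `D = A - B` solves the linear equation `Ḋ = (A + B)/η · D - δκA/η`, which the integrating
factor `exp(-∫ (A + B)/η)` turns into an explicit integral. -/
theorem isPrimitiveOn_sub_mul_discount (hA : IsRiccatiSol T δ C A) (hB : IsRiccatiSol T 0 C B) :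
    IsPrimitiveOn (fun t => (A t - B t) * (discount T 0 C A t * discount T 0 C B t))
      (fun t => -(δ * (C.kap t / C.eta t) * A t * (discount T 0 C A t * discount T 0 C B t)))
      (Ico 0 T) := by
  have hloc {f : ℝ → ℝ} (hf : ContinuousOn f (Ico 0 T)) : LocallyIntegrableOn f (Ico 0 T) :=
    hf.locallyIntegrableOn measurableSet_Ico
  have hEA := continuousOn_discount C hA.1 0
  have hEB := continuousOn_discount C hB.1 0
  have hrA := C.continuousOn_drift hA.1 0
  have hrB := C.continuousOn_drift hB.1 0
  refine ((hA.isPrimitiveOn.sub hB.isPrimitiveOn ordConnected_Ico hA.locallyIntegrableOn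
    hB.locallyIntegrableOn).mul ((isPrimitiveOn_discount C hA.1 0).mul
      (isPrimitiveOn_discount C hB.1 0) ordConnected_Ico (hloc (hrA.mul hEA).neg)
      (hloc (hrB.mul hEB).neg)) ordConnected_Ico
    (hA.locallyIntegrableOn.sub hB.locallyIntegrableOn)
    (hloc (((hrA.mul hEA).neg.mul hEB).add (hEA.mul (hrB.mul hEB).neg)))).congr
    ordConnected_Ico fun t ht => ?_
  have := (C.eta_pos t (Ico_subset_Icc_self ht)).ne'
  field_simp
  ring

theorem tendsto_sub_mul_discount (hA : IsRiccatiSol T δ C A) (hB : IsRiccatiSol T 0 C B)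
    (hδ : 0 ≤ δ) (hT : 0 < T) :
    Tendsto (fun t => (A t - B t) * (discount T 0 C A t * discount T 0 C B t)) (𝓝[<] T)
      (𝓝 0) := by
  have hlim : Tendsto (fun t => alpha T δ C A 0 * discount T 0 C B t +
      alpha T 0 C B 0 * discount T δ C A t) (𝓝[<] T) (𝓝 0) := by
    simpa using ((hB.tendsto_discount hT).const_mul _).add ((hA.tendsto_discount hT).const_mul _)
  refine squeeze_zero_norm' ?_ hlim
  filter_upwards [Ioo_mem_nhdsLT hT] with t ht
  have ht' := Ioo_subset_Ico_self ht
  have h0 : (0:ℝ) ∈ Ico 0 T := ⟨le_rfl, hT⟩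
  have hαA : A t * discount T δ C A t ≤ alpha T δ C A 0 := hA.antitoneOn_alpha h0 ht' ht'.1
  have hαB : B t * discount T 0 C B t ≤ alpha T 0 C B 0 := hB.antitoneOn_alpha h0 ht' ht'.1
  have hEA := discount_le_discount C hA.1 hδ ht'
  have hA0 := hA.pos ht'
  have hB0 := hB.pos ht'
  have hEA0 := discount_pos C 0 t (A := A)
  have hEB0 := discount_pos C 0 t (A := B)
  rw [Real.norm_eq_abs, abs_mul, abs_of_pos (mul_pos hEA0 hEB0)]
  calc |A t - B t| * (discount T 0 C A t * discount T 0 C B t)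
      ≤ (A t + B t) * (discount T 0 C A t * discount T 0 C B t) := by
        gcongr; exact abs_sub_le_iff.2 ⟨by linarith, by linarith⟩
    _ = A t * discount T 0 C A t * discount T 0 C B t +
          B t * discount T 0 C B t * discount T 0 C A t := by ring
    _ ≤ alpha T δ C A 0 * discount T 0 C B t + alpha T 0 C B 0 * discount T δ C A t := by
        refine add_le_add (mul_le_mul_of_nonneg_right ?_ hEB0.le)
          (mul_le_mul hαB hEA hEA0.le ((mul_pos hB0 hEB0).le.trans hαB))
        exact (mul_le_mul_of_nonneg_left hEA hA0.le).trans hαA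

theorem integral_forcing_mem_Icc (hA : IsRiccatiSol T δ C A) (hB : IsRiccatiSol T 0 C B)
    (hδ : 0 ≤ δ) {K : ℝ} (hK : ∀ t ∈ Ico 0 T, C.kap t ≤ K) {t₀ s : ℝ} (ht₀ : t₀ ∈ Ico 0 T)
    (hs : s ∈ Ico t₀ T) :
    ∫ u in t₀..s, δ * (C.kap u / C.eta u) * A u * (discount T 0 C A u * discount T 0 C B u) ∈
      Icc 0 (δ * K * (discount T 0 C A t₀ * discount T 0 C B t₀)) := by
  have hs' : s ∈ Ico 0 T := ⟨ht₀.1.trans hs.1, hs.2⟩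
  have hsub : Icc t₀ s ⊆ Ico 0 T := ordConnected_Ico.out ht₀ hs'
  have hnonneg {u : ℝ} (hu : u ∈ Icc t₀ s) :
      0 ≤ C.kap u ∧ 0 ≤ (A u - 0 * C.kap u) / C.eta u * discount T 0 C A u := by
    refine ⟨C.kap_nonneg u (Ico_subset_Icc_self (hsub hu)), mul_nonneg (div_nonneg ?_
      (C.eta_pos u (Ico_subset_Icc_self (hsub hu))).le) (discount_pos C 0 u).le⟩
    simpa using (hA.pos (hsub hu)).le
  have hK0 : 0 ≤ K := (hnonneg ⟨le_rfl, hs.1⟩).1.trans (hK t₀ ht₀)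
  constructor
  · refine integral_nonneg hs.1 fun u hu => ?_
    have := (hnonneg hu).2
    have := discount_pos C 0 u (A := B)
    calc (0:ℝ) ≤ δ * C.kap u * discount T 0 C B u *
          ((A u - 0 * C.kap u) / C.eta u * discount T 0 C A u) := by
          have := (hnonneg hu).1; positivity
      _ = _ := by ring
  have hEA := continuousOn_discount C hA.1 0
  have hEB := continuousOn_discount C hB.1 0
  have hΨA := isPrimitiveOn_discount C hA.1 0 t₀ ht₀ s hs'
  rw [intervalIntegral.integral_neg] at hΨA
  calc _ ≤ ∫ u in t₀..s, δ * K * discount T 0 C B t₀ *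
          ((A u - 0 * C.kap u) / C.eta u * discount T 0 C A u) := by
        refine integral_mono_on hs.1 ?_ ?_ fun u hu => ?_
        · exact ((((continuousOn_const.mul C.continuousOn_kap_div_eta).mul hA.1).mul
            (hEA.mul hEB)).mono (ordConnected_Ico.uIcc_subset ht₀ hs')).intervalIntegrable
        · exact ((continuousOn_const.mul ((C.continuousOn_drift hA.1 0).mul hEA)).mono
            (ordConnected_Ico.uIcc_subset ht₀ hs')).intervalIntegrable
        have := (hnonneg hu).2
        calc _ = δ * C.kap u * discount T 0 C B u *
              ((A u - 0 * C.kap u) / C.eta u * discount T 0 C A u) := by ring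
          _ ≤ _ := by
            have := discount_pos C 0 u (A := B)
            gcongr
            exacts [hK u (hsub hu), hB.antitoneOn_discount_zero ht₀ (hsub hu) hu.1]
    _ = δ * K * discount T 0 C B t₀ *
          ∫ u in t₀..s, (A u - 0 * C.kap u) / C.eta u * discount T 0 C A u :=
        intervalIntegral.integral_const_mul _ _
    _ ≤ δ * K * discount T 0 C B t₀ * discount T 0 C A t₀ := by
        have := discount_pos C 0 t₀ (A := B)
        gcongr
        linarith [discount_pos C 0 s (A := A)]
    _ = _ := by ring

theorem IsRiccatiSol.sub_mem_Icc (hA : IsRiccatiSol T δ C A) (hB : IsRiccatiSol T 0 C B)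
    (hδ : 0 ≤ δ) {K : ℝ} (hK : ∀ t ∈ Ico 0 T, C.kap t ≤ K) {t₀ : ℝ} (ht₀ : t₀ ∈ Ico 0 T) :
    A t₀ - B t₀ ∈ Icc 0 (δ * K) := by
  set Φ := fun t => discount T 0 C A t * discount T 0 C B t
  have hΦ : 0 < Φ t₀ := mul_pos (discount_pos C 0 t₀) (discount_pos C 0 t₀)
  have hlim : Tendsto (fun s => (A t₀ - B t₀) * Φ t₀ - (A s - B s) * Φ s) (𝓝[<] T)
      (𝓝 ((A t₀ - B t₀) * Φ t₀)) := by
    simpa using tendsto_const_nhds.sub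
      (tendsto_sub_mul_discount hA hB hδ (ht₀.1.trans_lt ht₀.2))
  have hmem : (A t₀ - B t₀) * Φ t₀ ∈ Icc 0 (δ * K * Φ t₀) := by
    refine isClosed_Icc.mem_of_tendsto hlim ?_
    filter_upwards [Ioo_mem_nhdsLT ht₀.2] with s hs
    have h := isPrimitiveOn_sub_mul_discount hA hB t₀ ht₀ s ⟨ht₀.1.trans hs.1.le, hs.2⟩
    rw [intervalIntegral.integral_neg] at h
    convert integral_forcing_mem_Icc hA hB hδ hK ht₀ (Ioo_subset_Ico_self hs) using 1
    simp only [Φ] at h ⊢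
    linarith
  exact ⟨(mul_nonneg_iff_of_pos_right hΦ).1 hmem.1, le_of_mul_le_mul_right hmem.2 hΦ⟩

end comparison

section continuity

variable {T δ : ℝ} {C : Coeffs T} {A B : ℝ → ℝ}

theorem abs_discount_sub_le (hA : IsRiccatiSol T δ C A) (hB : IsRiccatiSol T 0 C B)
    (hδ : 0 ≤ δ) {K m : ℝ} (hK : ∀ t ∈ Ico 0 T, C.kap t ≤ K) (hm : 0 < m)
    (hη : ∀ t ∈ Ico 0 T, m ≤ C.eta t) {t : ℝ} (ht : t ∈ Ico 0 T) :
    |discount T δ C A t - discount T 0 C B t| ≤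
      Real.exp (T * (δ * K / m)) - Real.exp (-(T * (δ * K / m))) := by
  have h0 : (0:ℝ) ∈ Ico 0 T := ⟨le_rfl, ht.1.trans_lt ht.2⟩
  have hsub := ordConnected_Ico.uIcc_subset h0 ht
  have hB1 : -∫ r in (0:ℝ)..t, (B r - 0 * C.kap r) / C.eta r ≤ 0 := by
    rw [← Real.exp_le_one_iff]
    exact (discount_zero C 0 (A := B)) ▸ hB.antitoneOn_discount_zero h0 ht ht.1
  refine Real.abs_exp_sub_exp_le hB1 ?_
  rw [sub_neg_eq_add, neg_add_eq_sub, ← integral_sub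
    ((C.continuousOn_drift hB.1 0).mono hsub).intervalIntegrable
    ((C.continuousOn_drift hA.1 δ).mono hsub).intervalIntegrable, ← Real.norm_eq_abs]
  refine (intervalIntegral.norm_integral_le_of_norm_le_const (C := δ * K / m)
    fun u hu => ?_).trans ?_
  · have hu' : u ∈ Ico 0 T := hsub (uIoc_subset_uIcc hu)
    have hη0 := C.eta_pos u (Ico_subset_Icc_self hu')
    have hD := hA.sub_mem_Icc hB hδ hK hu'
    have hκ := C.kap_nonneg u (Ico_subset_Icc_self hu')
    have hκK := hK u hu'
    rw [Real.norm_eq_abs, ← sub_div, abs_div, abs_of_pos hη0,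
      div_le_div_iff₀ hη0 hm]
    calc |B u - 0 * C.kap u - (A u - δ * C.kap u)| * m ≤ δ * K * m := by
          gcongr
          rw [abs_le]
          constructor <;> nlinarith [hD.1, hD.2]
      _ ≤ δ * K * C.eta u := by gcongr; exacts [mul_nonneg hδ (hκ.trans hκK), hη u hu']
  · rw [sub_zero, abs_of_nonneg ht.1, mul_comm]
    gcongr
    · exact div_nonneg (mul_nonneg hδ ((C.kap_nonneg t (Ico_subset_Icc_self ht)).trans
        (hK t ht))) hm.le
    · exact ht.2.le

theorem abs_alphaLim_sub_le (hA : IsRiccatiSol T δ C A) (hB : IsRiccatiSol T 0 C B)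
    (hδ : 0 ≤ δ) (hT : 0 < T) {K m M : ℝ} (hK : ∀ t ∈ Ico 0 T, C.kap t ≤ K) (hm : 0 < m)
    (hη : ∀ t ∈ Ico 0 T, m ≤ C.eta t) (hM : ∀ t ∈ Ico 0 T, |C.lam t| ≤ M) :
    |alphaLim T δ C A - alphaLim T 0 C B| ≤
      δ * K + M * T * (Real.exp (T * (δ * K / m)) - Real.exp (-(T * (δ * K / m)))) := by
  set ε := Real.exp (T * (δ * K / m)) - Real.exp (-(T * (δ * K / m)))
  have h0 : (0:ℝ) ∈ Ico 0 T := ⟨le_rfl, hT⟩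
  have hε : 0 ≤ ε := (abs_nonneg _).trans (abs_discount_sub_le hA hB hδ hK hm hη h0)
  have hM0 : 0 ≤ M := (abs_nonneg _).trans (hM 0 h0)
  have hD := hA.sub_mem_Icc hB hδ hK h0
  have hbound : ∀ t ∈ Ico 0 T, |alpha T δ C A t - alpha T 0 C B t| ≤ δ * K + M * T * ε := by
    intro t ht
    have hsub := ordConnected_Ico.uIcc_subset h0 ht
    have hint : |(∫ u in (0:ℝ)..t, C.lam u * discount T δ C A u) -
        ∫ u in (0:ℝ)..t, C.lam u * discount T 0 C B u| ≤ M * ε * |t - 0| := by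
      rw [← integral_sub
        ((locallyIntegrableOn_lam_mul_discount C hA.1 δ).intervalIntegrable ordConnected_Ico h0 ht)
        ((locallyIntegrableOn_lam_mul_discount C hB.1 0).intervalIntegrable ordConnected_Ico h0 ht),
        ← Real.norm_eq_abs]
      refine intervalIntegral.norm_integral_le_of_norm_le_const fun u hu => ?_
      have hu' := hsub (uIoc_subset_uIcc hu)
      rw [Real.norm_eq_abs, ← mul_sub, abs_mul]
      exact mul_le_mul (hM u hu') (abs_discount_sub_le hA hB hδ hK hm hη hu') (abs_nonneg _) hM0
    rw [sub_zero, abs_of_nonneg ht.1] at hint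
    rw [hA.alpha_eq_sub_integral ht, hB.alpha_eq_sub_integral ht]
    calc |A 0 - (∫ u in (0:ℝ)..t, C.lam u * discount T δ C A u) -
          (B 0 - ∫ u in (0:ℝ)..t, C.lam u * discount T 0 C B u)|
        ≤ |A 0 - B 0| + |(∫ u in (0:ℝ)..t, C.lam u * discount T δ C A u) -
          ∫ u in (0:ℝ)..t, C.lam u * discount T 0 C B u| := by
          rw [sub_sub_sub_comm]; exact abs_sub _ _
      _ ≤ δ * K + M * ε * t := add_le_add (abs_le.2 ⟨by linarith [hD.1, hD.2], hD.2⟩) hint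
      _ ≤ δ * K + M * T * ε := by nlinarith [mul_nonneg hM0 hε, ht.2]
  exact le_of_tendsto ((hA.tendsto_alpha hT).sub (hB.tendsto_alpha hT)).abs
    (mem_of_superset (Ioo_mem_nhdsLT hT) fun t ht => hbound t (Ioo_subset_Ico_self ht))

theorem tendsto_alphaLim {s : Set ℝ} (hs : s ⊆ Ici 0) (hT : 0 < T) {A : ℝ → ℝ → ℝ}
    (hA : ∀ δ ∈ s, IsRiccatiSol T δ C (A δ)) (hB : IsRiccatiSol T 0 C B) :
    Tendsto (fun δ => alphaLim T δ C (A δ)) (𝓝[s] 0) (𝓝 (alphaLim T 0 C B)) := by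
  obtain ⟨K, hK⟩ := isCompact_Icc.exists_bound_of_continuousOn C.continuousOn_kap
  obtain ⟨t₁, ht₁, hmin⟩ :=
    isCompact_Icc.exists_isMinOn (nonempty_Icc.2 hT.le) C.continuousOn_eta
  obtain ⟨M, hM⟩ := C.lam_bdd
  set m := C.eta t₁
  have hε : Tendsto (fun δ : ℝ => δ * K + M * T *
      (Real.exp (T * (δ * K / m)) - Real.exp (-(T * (δ * K / m))))) (𝓝 0) (𝓝 0) := by
    have : Continuous fun δ : ℝ => δ * K + M * T *
        (Real.exp (T * (δ * K / m)) - Real.exp (-(T * (δ * K / m)))) := by fun_prop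
    simpa using this.tendsto 0
  rw [tendsto_iff_norm_sub_tendsto_zero]
  refine squeeze_zero' (.of_forall fun _ => norm_nonneg _)
    (eventually_nhdsWithin_of_forall fun δ hδ => ?_) (hε.mono_left nhdsWithin_le_nhds)
  exact abs_alphaLim_sub_le (hA δ hδ) hB (hs hδ) hT
    (fun t ht => (Real.le_norm_self _).trans (hK t (Ico_subset_Icc_self ht)))
    (C.eta_pos t₁ ht₁) (fun t ht => isMinOn_iff.1 hmin t (Ico_subset_Icc_self ht))
    (fun t ht => hM t (Ico_subset_Icc_self ht))

end continuity

/-- For every `δ ∈ [0,1]` the map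
`t ↦ α^δ_t := A^δ_t · exp(-∫_0^t (A^δ_r - δκ_r)/η_r dr)` is non-increasing on `[0,T)`, the
limit `α^δ_T := lim_{t↗T} α^δ_t` exists and lies in `(0,∞)`, and `lim_{δ→0} α^δ_T = α⁰_T`. -/
theorem stmt_3 (T : ℝ) (hT : 0 < T) (C : Coeffs T)
    (A : ℝ → ℝ → ℝ) (hA : ∀ δ ∈ Set.Icc (0:ℝ) 1, IsRiccatiSol T δ C (A δ)) :
    (∀ δ ∈ Set.Icc (0:ℝ) 1, ∀ s ∈ Set.Ico (0:ℝ) T, ∀ t ∈ Set.Ico (0:ℝ) T, s ≤ t →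
      A δ t * Real.exp (-∫ r in (0:ℝ)..t, (A δ r - δ * C.kap r) / C.eta r) ≤
        A δ s * Real.exp (-∫ r in (0:ℝ)..s, (A δ r - δ * C.kap r) / C.eta r)) ∧
    (∃ αT : ℝ → ℝ,
      (∀ δ ∈ Set.Icc (0:ℝ) 1, 0 < αT δ ∧
        Filter.Tendsto
          (fun t => A δ t * Real.exp (-∫ r in (0:ℝ)..t, (A δ r - δ * C.kap r) / C.eta r))
          (nhdsWithin T (Set.Iio T)) (nhds (αT δ))) ∧
      Filter.Tendsto αT (nhdsWithin 0 (Set.Icc 0 1)) (nhds (αT 0))) :=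
  ⟨fun δ hδ => (hA δ hδ).antitoneOn_alpha,
    fun δ => alphaLim T δ C (A δ),
    fun δ hδ => ⟨(hA δ hδ).alphaLim_pos hT, (hA δ hδ).tendsto_alpha hT⟩,
    tendsto_alphaLim (fun _ hδ => hδ.1) hT hA (hA 0 ⟨le_rfl, zero_le_one⟩)⟩
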